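/- For the regular pentagon inscribed in the unit circle, the value x = (2√(10−2√5) + 5 − √5)/(2√(10−2√5) + 5 + √5) ∈ (0,1) satisfies ‖V_2 − (x,0)‖ = (1 − x) + e_5, where V_2 = (cos(4π/5), sin(4π/5)) and e_5 = 2·sin(π/5). -/

import Mathlib

noncomputable def pt (x y : ℝ) : EuclideanSpace ℝ (Fin 2) := WithLp.toLp 2 ![x, y]

/-!
Write `V₂ = (c, s)` with `c² + s² = 1` and `e = e₅`. Squaring `‖V₂ − (x,0)‖ = (1 − x) + e` cancels
the `x²` terms, leaving the linear equation `2x(1 − c + e) = 2e + e²`. With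
`c = −(1 + √5)/4` and `e = √(10 − 2√5)/2` its root is the stated value of `x`.
-/

open Real

theorem sin_pi_div_five : sin (π / 5) = √(10 - 2 * √5) / 4 := by
  have h5 : √5 ^ 2 = 5 := sq_sqrt (by norm_num)
  have hsq : 1 - ((1 + √5) / 4) ^ 2 = (10 - 2 * √5) / 4 ^ 2 := by linear_combination -h5 / 16
  rw [sin_eq_sqrt_one_sub_cos_sq (by positivity) (by linarith [pi_pos]), cos_pi_div_five, hsq,
    sqrt_div' _ (by positivity), sqrt_sq zero_le_four]

theorem cos_four_pi_div_five : cos (4 * π / 5) = -((1 + √5) / 4) := by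
  rw [show 4 * π / 5 = π - π / 5 by ring, cos_pi_sub, cos_pi_div_five]

theorem dist_pt (a b c d : ℝ) : dist (pt a b) (pt c d) = √((a - c) ^ 2 + (b - d) ^ 2) := by
  simp [pt, EuclideanSpace.dist_eq, Fin.sum_univ_two, Real.dist_eq, sq_abs]

theorem dist_pt_eq_sub_add {c s e x : ℝ} (hcs : c ^ 2 + s ^ 2 = 1) (he : 0 ≤ e) (hx1 : x ≤ 1)
    (hx : x * (2 * (1 - c + e)) = 2 * e + e ^ 2) :
    dist (pt c s) (pt x 0) = (1 - x) + e := by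
  rw [dist_pt, sqrt_eq_iff_eq_sq (by positivity) (by linarith)]
  linear_combination hcs + hx

/-- For the regular pentagon inscribed in the unit circle, the value
`x = (2√(10−2√5) + 5 − √5)/(2√(10−2√5) + 5 + √5)` lies in `(0,1)` and satisfies
`‖V₂ − (x,0)‖ = (1 − x) + e₅`, where `V₂ = (cos(4π/5), sin(4π/5))` and
`e₅ = 2 sin(π/5)`. -/
theorem pentagon_three_servants :
    let x : ℝ := (2 * Real.sqrt (10 - 2 * Real.sqrt 5) + 5 - Real.sqrt 5) /
      (2 * Real.sqrt (10 - 2 * Real.sqrt 5) + 5 + Real.sqrt 5)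
    let V₂ := pt (Real.cos (4 * Real.pi / 5)) (Real.sin (4 * Real.pi / 5))
    x ∈ Set.Ioo (0 : ℝ) 1 ∧
    dist V₂ (pt x 0) = (1 - x) + 2 * Real.sin (Real.pi / 5) := by
  intro x V₂
  have hr : √5 ^ 2 = 5 := sq_sqrt (by norm_num)
  have hr_pos : 0 < √5 := by positivity
  have hr_lt : √5 < 3 := by nlinarith
  have hs : √(10 - 2 * √5) ^ 2 = 10 - 2 * √5 := sq_sqrt (by linarith)
  have hs_pos : 0 < √(10 - 2 * √5) := sqrt_pos.mpr (by linarith)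
  have hden : 0 < 2 * √(10 - 2 * √5) + 5 + √5 := by positivity
  have hx_pos : 0 < x := div_pos (by linarith) hden
  have hx_lt : x < 1 := (div_lt_one hden).mpr (by linarith)
  refine ⟨⟨hx_pos, hx_lt⟩, dist_pt_eq_sub_add (cos_sq_add_sin_sq _) ?_ hx_lt.le ?_⟩
  · rw [sin_pi_div_five]
    positivity
  · rw [cos_four_pi_div_five, sin_pi_div_five]
    simp only [x]
    field_simp
    linear_combination -(10 + 2 * √5 + 4 * √(10 - 2 * √5)) * hs
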